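/- arXiv:1407.6909 — 3 statements merged into one kernel-verified Lean document; each statement's English description precedes it below -/
import Mathlib

section
/- Let X = [[0,−1,0],[1,0,−1],[0,−1,0]], Y = [[0,−1,0],[−1,0,1],[0,−1,0]], Z = [[2,0,−2],[0,0,0],[2,0,−2]], and define the linear functional F on M₃(ℂ) by F(A) = (1/16)·trace(A·Zᵀ), so that F(X) = F(Y) = 0 and F(Z) = 1. Let L = span_ℂ{X + iY, Z} ⊂ M₃(ℂ). Then: (i) L is an abelian complex Lie subalgebra of M₃(ℂ), i.e. [W₁, W₂] = 0 for all W₁, W₂ ∈ L (in particular F vanishes on all brackets of elements of L); and (ii) the positivity condition holds: for every W ∈ L, the number i·F([W, W̄]) is a nonnegative real number, where W̄ denotes the entrywise complex conjugate of W. (Thus L is a positive polarization at the functional F = Z*.) -/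
open Matrix

noncomputable section

def Xm : Matrix (Fin 3) (Fin 3) ℂ := !![0, -1, 0; 1, 0, -1; 0, -1, 0]

def Ym : Matrix (Fin 3) (Fin 3) ℂ := !![0, -1, 0; -1, 0, 1; 0, -1, 0]

def Zm : Matrix (Fin 3) (Fin 3) ℂ := !![2, 0, -2; 0, 0, 0; 2, 0, -2]

/-- The linear functional `F(A) = (1/16)·trace(A·Zᵀ)`, i.e. the functional `Z*`. -/
def Ffun (A : Matrix (Fin 3) (Fin 3) ℂ) : ℂ := (1 / 16 : ℂ) * (A * Zmᵀ).trace

/-- The polarization `L = span_ℂ{X + iY, Z}`. -/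
def Lpol : Submodule ℂ (Matrix (Fin 3) (Fin 3) ℂ) :=
  Submodule.span ℂ {Xm + Complex.I • Ym, Zm}


/-!
Write `V = X + iY`, so that `L = span{V, Z}` and `W̄ = āV̄ + b̄Z` for `W = aV + bZ`, since `X`,
`Y`, `Z` are real. The matrix `Z` commutes with both `V` and `V̄`, hence the bracket of two
elements of `L` only sees their `V`-components: it is a multiple of `[V, V] = 0`, and
`[W, W̄] = |a|² [V, V̄] = -2i |a|² Z`. Therefore `i F([W, W̄]) = 2 |a|² ≥ 0`.
-/

theorem lie_smul_add_smul_of_commute {R A : Type*} [CommRing R] [Ring A] [Algebra R A]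
    {x y z : A} (hxz : Commute x z) (hyz : Commute y z) (a b c d : R) :
    ⁅a • x + b • z, c • y + d • z⁆ = (a * c) • ⁅x, y⁆ := by
  simp only [Ring.lie_def, add_mul, mul_add, smul_mul_smul_comm, hxz.eq, hyz.eq]
  module

theorem Matrix.map_conj_smul_add_smul {m n : Type*} (a b : ℂ) (A B : Matrix m n ℂ) :
    (a • A + b • B).map (starRingEnd ℂ) =
      starRingEnd ℂ a • A.map (starRingEnd ℂ) + starRingEnd ℂ b • B.map (starRingEnd ℂ) := by
  ext i j
  simp

theorem Ffun_smul (c : ℂ) (A : Matrix (Fin 3) (Fin 3) ℂ) : Ffun (c • A) = c * Ffun A := by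
  rw [Ffun, Ffun, smul_mul, trace_smul, smul_eq_mul, mul_left_comm]

theorem Ffun_Xm : Ffun Xm = 0 := by
  simp [Ffun, Xm, Zm, trace_fin_three, vecMul, dotProduct, Fin.sum_univ_three]

theorem Ffun_Ym : Ffun Ym = 0 := by
  simp [Ffun, Ym, Zm, trace_fin_three, vecMul, dotProduct, Fin.sum_univ_three]

theorem Ffun_Zm : Ffun Zm = 1 := by
  simp [Ffun, Zm, trace_fin_three, vecMul, dotProduct, Fin.sum_univ_three]
  norm_num

def Vm : Matrix (Fin 3) (Fin 3) ℂ := Xm + Complex.I • Ym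

def Vmbar : Matrix (Fin 3) (Fin 3) ℂ := Xm - Complex.I • Ym

theorem Vm_map_conj : Vm.map (starRingEnd ℂ) = Vmbar := by
  ext i j
  fin_cases i <;> fin_cases j <;> simp [Vm, Vmbar, Xm, Ym]; ring

theorem Zm_map_conj : Zm.map (starRingEnd ℂ) = Zm := by
  ext i j
  fin_cases i <;> fin_cases j <;> simp [Zm, map_ofNat]

theorem commute_Vm_Zm : Commute Vm Zm := by
  show Vm * Zm = Zm * Vm
  ext i j
  fin_cases i <;> fin_cases j <;> simp [Vm, Xm, Ym, Zm] <;> ring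

theorem commute_Vmbar_Zm : Commute Vmbar Zm := by
  show Vmbar * Zm = Zm * Vmbar
  ext i j
  fin_cases i <;> fin_cases j <;> simp [Vmbar, Xm, Ym, Zm] <;> ring

theorem lie_Vm_Vmbar : ⁅Vm, Vmbar⁆ = (-2 * Complex.I) • Zm := by
  rw [Ring.lie_def]
  ext i j
  fin_cases i <;> fin_cases j <;> simp [Vm, Vmbar, Xm, Ym, Zm] <;> ring_nf

theorem exists_eq_of_mem_Lpol {W : Matrix (Fin 3) (Fin 3) ℂ} (hW : W ∈ Lpol) :
    ∃ a b : ℂ, W = a • Vm + b • Zm := by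
  obtain ⟨a, b, h⟩ := Submodule.mem_span_pair.mp hW
  exact ⟨a, b, h.symm⟩

theorem lie_smul_Vm_add_smul_Zm_map_conj (a b : ℂ) :
    ⁅a • Vm + b • Zm, (a • Vm + b • Zm).map (starRingEnd ℂ)⁆ =
      (-2 * Complex.I * Complex.normSq a) • Zm := by
  rw [map_conj_smul_add_smul, Vm_map_conj, Zm_map_conj,
    lie_smul_add_smul_of_commute commute_Vm_Zm commute_Vmbar_Zm, lie_Vm_Vmbar, smul_smul,
    Complex.mul_conj, mul_comm]

/-- `F(X) = F(Y) = 0`, `F(Z) = 1`; `L` is an abelian complex Lie subalgebra (so `F`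
vanishes on brackets of elements of `L`), and for every `W ∈ L` the number
`i·F([W, W̄])` is a nonnegative real: `L` is a positive polarization at `F = Z*`. -/
theorem positive_polarization_at_Zstar :
    Ffun Xm = 0 ∧ Ffun Ym = 0 ∧ Ffun Zm = 1 ∧
    (∀ W₁ ∈ Lpol, ∀ W₂ ∈ Lpol, W₁ * W₂ - W₂ * W₁ = 0) ∧
    (∀ W ∈ Lpol,
      ∃ r : ℝ, 0 ≤ r ∧
        Complex.I * Ffun (W * W.map (starRingEnd ℂ) - W.map (starRingEnd ℂ) * W) = (r : ℂ)) := by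
  refine ⟨Ffun_Xm, Ffun_Ym, Ffun_Zm, ?_, ?_⟩
  · intro W₁ h₁ W₂ h₂
    obtain ⟨a₁, b₁, rfl⟩ := exists_eq_of_mem_Lpol h₁
    obtain ⟨a₂, b₂, rfl⟩ := exists_eq_of_mem_Lpol h₂
    rw [← Ring.lie_def, lie_smul_add_smul_of_commute commute_Vm_Zm commute_Vm_Zm,
      Ring.lie_def, sub_self, smul_zero]
  · intro W hW
    obtain ⟨a, b, rfl⟩ := exists_eq_of_mem_Lpol hW
    refine ⟨2 * Complex.normSq a, mul_nonneg zero_le_two (Complex.normSq_nonneg a), ?_⟩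
    rw [← Ring.lie_def, lie_smul_Vm_add_smul_Zm_map_conj, Ffun_smul, Ffun_Zm]
    push_cast
    linear_combination (-2 * (Complex.normSq a : ℂ)) * Complex.I_sq
end
end

section
/- Let f : M₃(ℝ) → ℂ be continuous with compact support, and let a₁, a₂, a₃ ∈ ℝ be pairwise distinct. Then the elliptic orbital integral over the unipotent group satisfies the change-of-variables identity ∫_{ℝ³} f( u(x,y,z)⁻¹ · diag(a₁,a₂,a₃) · u(x,y,z) ) dx dy dz = |a₁−a₂|⁻¹ · |a₂−a₃|⁻¹ · |a₁−a₃|⁻¹ · ∫_{ℝ³} f( [[a₁,p,r],[0,a₂,q],[0,0,a₃]] ) dp dq dr, and in particular the left-hand integral converges absolutely. -/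
open Matrix MeasureTheory

noncomputable section

/-- The upper unipotent matrix `u(x,y,z)`. -/
def unip (x y z : ℝ) : Matrix (Fin 3) (Fin 3) ℝ := !![1, x, z; 0, 1, y; 0, 0, 1]

lemma unip_inv (x y z : ℝ) :
    (unip x y z)⁻¹ = !![1, -x, x*y - z; 0, 1, -y; 0, 0, 1] := by
  apply Matrix.inv_eq_left_inv
  rw [unip, Matrix.mul_fin_three, Matrix.one_fin_three]
  congr 1 <;> ring

lemma conj_eq (a₁ a₂ a₃ x y z : ℝ) :
    (unip x y z)⁻¹ * Matrix.diagonal ![a₁, a₂, a₃] * unip x y z =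
      !![a₁, (a₁-a₂)*x, (a₃-a₂)*(x*y) + (a₁-a₃)*z; 0, a₂, (a₂-a₃)*y; 0, 0, a₃] := by
  have hd : Matrix.diagonal ![a₁, a₂, a₃] = !![a₁,0,0;0,a₂,0;0,0,a₃] := by
    ext i j
    fin_cases i <;> fin_cases j <;>
      simp [Matrix.diagonal, Matrix.vecHead, Matrix.vecTail]
  rw [unip_inv, hd, unip, Matrix.mul_fin_three, Matrix.mul_fin_three]
  congr 1 <;> ring

lemma smul_prod_meas {α β : Type*} [MeasurableSpace α] [MeasurableSpace β]
    (c : ENNReal) (μ : Measure α) (ν : Measure β) [SFinite ν] :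
    (c • μ).prod ν = c • μ.prod ν := by
  ext s hs
  rw [Measure.smul_apply, Measure.prod_apply hs, Measure.prod_apply hs,
    lintegral_smul_measure]

lemma prod_smul_meas {α β : Type*} [MeasurableSpace α] [MeasurableSpace β]
    (c : ENNReal) (μ : Measure α) (ν : Measure β) [SFinite ν] :
    μ.prod (c • ν) = c • μ.prod ν := by
  ext s hs
  rw [Measure.smul_apply, Measure.prod_apply hs, Measure.prod_apply hs, smul_eq_mul,
    ← lintegral_const_mul _ (measurable_measure_prodMk_left hs)]
  simp

lemma shear_mp (d : ℝ) :
    MeasurePreserving (fun p : ℝ × ℝ × ℝ => (p.1, (p.2.1, p.2.2 + d * p.1 * p.2.1)))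
      volume volume := by
  have inner : ∀ x : ℝ, MeasurePreserving (fun q : ℝ × ℝ => (q.1, q.2 + d * x * q.1))
      ((volume : Measure ℝ).prod (volume : Measure ℝ))
      ((volume : Measure ℝ).prod (volume : Measure ℝ)) := by
    intro x
    refine MeasurePreserving.skew_product (f := id) (g := fun (a c : ℝ) => c + d * x * a)
      (MeasurePreserving.id _) ?_ (ae_of_all _ fun y => map_add_right_eq_self volume (d * x * y))
    exact measurable_snd.add (measurable_const.mul measurable_fst)
  rw [Measure.volume_eq_prod, Measure.volume_eq_prod (α := ℝ) (β := ℝ)]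
  refine MeasurePreserving.skew_product (f := id)
    (g := fun (x : ℝ) (q : ℝ × ℝ) => (q.1, q.2 + d * x * q.1)) (MeasurePreserving.id _) ?_
    (ae_of_all _ fun x => (inner x).map_eq)
  exact measurable_snd.fst.prodMk
    (measurable_snd.snd.add ((measurable_const.mul measurable_fst).mul measurable_snd.fst))

lemma map_scale (c₁ c₂ c₃ : ℝ) (h₁ : c₁ ≠ 0) (h₂ : c₂ ≠ 0) (h₃ : c₃ ≠ 0) :
    Measure.map (fun p : ℝ × ℝ × ℝ => (c₁ * p.1, (c₂ * p.2.1, c₃ * p.2.2))) volume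
      = ENNReal.ofReal (|c₁|⁻¹ * |c₂|⁻¹ * |c₃|⁻¹) • volume := by
  have e1 := Real.map_volume_mul_left h₁
  have e2 := Real.map_volume_mul_left h₂
  have e3 := Real.map_volume_mul_left h₃
  rw [Measure.volume_eq_prod, Measure.volume_eq_prod (α := ℝ) (β := ℝ)]
  have hfun : (fun p : ℝ × ℝ × ℝ => (c₁ * p.1, (c₂ * p.2.1, c₃ * p.2.2)))
      = Prod.map (c₁ * ·) (Prod.map (c₂ * ·) (c₃ * ·)) := rfl
  rw [hfun, ← Measure.map_prod_map _ _ (by fun_prop) (by fun_prop),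
    ← Measure.map_prod_map _ _ (by fun_prop) (by fun_prop), e1, e2, e3]
  simp only [smul_prod_meas, prod_smul_meas, smul_smul]
  congr 1
  rw [← ENNReal.ofReal_mul (by positivity), ← ENNReal.ofReal_mul (by positivity),
    abs_inv, abs_inv, abs_inv]
  ring_nf

/-- The linear part of the parametrization of upper triangular matrices. -/
def entL : (ℝ × ℝ × ℝ) →ₗ[ℝ] Matrix (Fin 3) (Fin 3) ℝ where
  toFun q := !![0, q.1, q.2.2; 0, 0, q.2.1; 0, 0, 0]
  map_add' p q := by
    ext i j
    fin_cases i <;> fin_cases j <;> simp [Matrix.vecHead, Matrix.vecTail]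
  map_smul' c q := by
    ext i j
    fin_cases i <;> fin_cases j <;> simp [Matrix.vecHead, Matrix.vecTail]

lemma entL_inj : Function.Injective entL := by
  intro p q h
  have h1 := congrFun (congrFun h 0) 1
  have h2 := congrFun (congrFun h 1) 2
  have h3 := congrFun (congrFun h 0) 2
  simp [entL] at h1 h2 h3
  exact Prod.ext h1 (Prod.ext h2 h3)

/-- The elliptic orbital integral over the unipotent group: for a continuous compactly
supported `f` and pairwise distinct `a₁, a₂, a₃`, the integral of
`f(u(x,y,z)⁻¹ diag(a₁,a₂,a₃) u(x,y,z))` over `ℝ³` converges absolutely and equals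
`|a₁-a₂|⁻¹|a₂-a₃|⁻¹|a₁-a₃|⁻¹` times the integral of `f` over the upper
triangular matrices with diagonal `(a₁,a₂,a₃)`. -/
theorem elliptic_orbital_integral (f : Matrix (Fin 3) (Fin 3) ℝ → ℂ)
    (hf : Continuous f) (hsupp : HasCompactSupport f)
    (a₁ a₂ a₃ : ℝ) (h₁₂ : a₁ ≠ a₂) (h₁₃ : a₁ ≠ a₃) (h₂₃ : a₂ ≠ a₃) :
    Integrable (fun p : ℝ × ℝ × ℝ =>
      f ((unip p.1 p.2.1 p.2.2)⁻¹ * Matrix.diagonal ![a₁, a₂, a₃] * unip p.1 p.2.1 p.2.2)) ∧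
    ∫ p : ℝ × ℝ × ℝ,
        f ((unip p.1 p.2.1 p.2.2)⁻¹ * Matrix.diagonal ![a₁, a₂, a₃] * unip p.1 p.2.1 p.2.2) =
      (|a₁ - a₂|⁻¹ * |a₂ - a₃|⁻¹ * |a₁ - a₃|⁻¹) •
        ∫ p : ℝ × ℝ × ℝ, f !![a₁, p.1, p.2.2; 0, a₂, p.2.1; 0, 0, a₃] := by
  set c₁ := a₁ - a₂ with hc₁
  set c₂ := a₂ - a₃ with hc₂
  set c₃ := a₁ - a₃ with hc₃
  have hc₁0 : c₁ ≠ 0 := sub_ne_zero.mpr h₁₂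
  have hc₂0 : c₂ ≠ 0 := sub_ne_zero.mpr h₂₃
  have hc₃0 : c₃ ≠ 0 := sub_ne_zero.mpr h₁₃
  set g : ℝ × ℝ × ℝ → ℂ := fun q => f !![a₁, q.1, q.2.2; 0, a₂, q.2.1; 0, 0, a₃] with hg
  set φ : ℝ × ℝ × ℝ → ℝ × ℝ × ℝ :=
    fun p => (c₁ * p.1, (c₂ * p.2.1, (a₃ - a₂) * (p.1 * p.2.1) + c₃ * p.2.2)) with hφ
  -- the parametrization as an affine map
  have hAeq : ∀ q : ℝ × ℝ × ℝ,
      !![a₁, q.1, q.2.2; 0, a₂, q.2.1; 0, 0, a₃] = !![a₁,0,0;0,a₂,0;0,0,a₃] + entL q := by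
    intro q
    ext i j
    fin_cases i <;> fin_cases j <;> simp [entL, Matrix.vecHead, Matrix.vecTail]
  have hA_cont : Continuous fun q : ℝ × ℝ × ℝ =>
      !![a₁, q.1, q.2.2; 0, a₂, q.2.1; 0, 0, a₃] := by
    simp only [hAeq]
    exact continuous_const.add entL.continuous_of_finiteDimensional
  have hA_emb : Topology.IsClosedEmbedding fun q : ℝ × ℝ × ℝ =>
      !![a₁, q.1, q.2.2; 0, a₂, q.2.1; 0, 0, a₃] := by
    simp only [hAeq]
    exact (Homeomorph.addLeft _).isClosedEmbedding.comp
      (entL.isClosedEmbedding_of_injective (LinearMap.ker_eq_bot.mpr entL_inj))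
  have hg_cont : Continuous g := hf.comp hA_cont
  have hg_supp : HasCompactSupport g := hsupp.comp_isClosedEmbedding hA_emb
  have hg_int : Integrable g := hg_cont.integrable_of_hasCompactSupport hg_supp
  -- the integrand is `g ∘ φ`
  have key : (fun p : ℝ × ℝ × ℝ =>
      f ((unip p.1 p.2.1 p.2.2)⁻¹ * Matrix.diagonal ![a₁, a₂, a₃] * unip p.1 p.2.1 p.2.2))
      = g ∘ φ := by
    funext p
    rw [conj_eq]
    rfl
  -- pushforward of volume under φ
  have hφm : Measurable φ := by fun_prop
  have hmap : Measure.map φ volume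
      = ENNReal.ofReal (|c₁|⁻¹ * |c₂|⁻¹ * |c₃|⁻¹) • volume := by
    have hcomp : φ = (fun p : ℝ × ℝ × ℝ => (c₁ * p.1, (c₂ * p.2.1, c₃ * p.2.2))) ∘
        (fun p : ℝ × ℝ × ℝ => (p.1, (p.2.1, p.2.2 + (a₃ - a₂) / c₃ * p.1 * p.2.1))) := by
      funext p
      simp only [hφ, Function.comp_apply]
      refine Prod.ext rfl (Prod.ext rfl ?_)
      field_simp
      ring
    rw [hcomp, ← Measure.map_map (by fun_prop) (shear_mp ((a₃ - a₂) / c₃)).measurable,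
      (shear_mp ((a₃ - a₂) / c₃)).map_eq, map_scale c₁ c₂ c₃ hc₁0 hc₂0 hc₃0]
  have hpos : 0 < |c₁|⁻¹ * |c₂|⁻¹ * |c₃|⁻¹ := by positivity
  have hg_sm : AEStronglyMeasurable g (Measure.map φ volume) := hg_cont.aestronglyMeasurable
  constructor
  · rw [key]
    refine (integrable_map_measure hg_sm hφm.aemeasurable).mp ?_
    rw [hmap]
    exact (integrable_smul_measure (ENNReal.ofReal_pos.mpr hpos).ne' ENNReal.ofReal_ne_top).mpr hg_int
  · rw [key]
    calc ∫ p, (g ∘ φ) p = ∫ q, g q ∂(Measure.map φ volume) :=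
          (integral_map hφm.aemeasurable hg_sm).symm
      _ = (ENNReal.ofReal (|c₁|⁻¹ * |c₂|⁻¹ * |c₃|⁻¹)).toReal • ∫ q, g q := by
          rw [hmap, integral_smul_measure]
      _ = (|c₁|⁻¹ * |c₂|⁻¹ * |c₃|⁻¹) • ∫ q, g q := by
          rw [ENNReal.toReal_ofReal hpos.le]
end
end

section
/- Let f : M₃(ℝ) → ℂ be continuous with compact support. For 0 < λ < 1 and t > 0 set M(λ,t) = [[√(1−λ²), tλ, 0],[−t⁻¹λ, √(1−λ²), 0],[0,0,1]] and F(±λ) = ∫₀^∞ sign(t−1) · f(M(±λ,t)) dt. Let n(u) = [[1,u,0],[0,1,0],[0,0,1]]. Then lim_{λ→0⁺} λ·F(λ) = ∫₀^∞ f(n(u)) du and lim_{λ→0⁺} λ·F(−λ) = ∫₀^∞ f(n(−u)) du; consequently λ·(F(λ) − F(−λ)) tends to ∫₀^∞ ( f(n(u)) − f(n(−u)) ) du as λ → 0⁺. (This gives the leading singular behavior of the parabolic orbital integral near the identity, underlying the continuity of the stable orbital integral transfer.) -/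
open Matrix MeasureTheory Filter

noncomputable section

/-- The conjugated rotation-type matrix `M(λ,t)`. -/
def Mmat (l t : ℝ) : Matrix (Fin 3) (Fin 3) ℝ :=
  !![Real.sqrt (1 - l ^ 2), t * l, 0;
     -(t⁻¹ * l), Real.sqrt (1 - l ^ 2), 0;
     0, 0, 1]

/-- The parabolic orbital integral `F(λ) = ∫₀^∞ sign(t-1)·f(M(λ,t)) dt`. -/
def Forb (f : Matrix (Fin 3) (Fin 3) ℝ → ℂ) (l : ℝ) : ℂ :=
  ∫ t in Set.Ioi (0 : ℝ), (Real.sign (t - 1) : ℂ) * f (Mmat l t)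

/-- The unipotent matrix `n(u)`. -/
def nMat (u : ℝ) : Matrix (Fin 3) (Fin 3) ℝ := !![1, u, 0; 0, 1, 0; 0, 0, 1]

/-!
Substituting `t = u / λ` turns `λ F(sλ)` into `∫₀^∞ sign(u/λ - 1) f(M(sλ, u/λ)) du`. The `(0,1)`
entry of `M(sλ, u/λ)` is `s u`, so the compact support of `f` confines the integrand to a bounded
range of `u` independent of `λ`; for fixed `u > 0` and `λ < u` the sign is `1` and `M(sλ, u/λ)`
tends to `n(su)`. Dominated convergence gives the limit.
-/

open Set Topology

lemma Real.measurable_sign : Measurable Real.sign := by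
  unfold Real.sign
  exact Measurable.ite measurableSet_Iio measurable_const
    (Measurable.ite measurableSet_Ioi measurable_const measurable_const)

lemma Real.abs_sign_le_one (x : ℝ) : |Real.sign x| ≤ 1 := by
  rcases Real.sign_apply_eq x with h | h | h <;> simp [h]

lemma HasCompactSupport.exists_eq_zero_of_lt_abs {X E : Type*} [TopologicalSpace X] [Zero E]
    {f : X → E} (hf : HasCompactSupport f) {g : X → ℝ} (hg : Continuous g) :
    ∃ R, ∀ x, R < |g x| → f x = 0 := by
  obtain ⟨R, hR⟩ := (hf.image hg).isBounded.subset_closedBall 0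
  refine ⟨R, fun x hx => image_eq_zero_of_notMem_tsupport fun hmem => hx.not_ge ?_⟩
  simpa [Real.dist_eq] using hR (mem_image_of_mem g hmem)

@[simp]
lemma Mmat_apply_zero_one (l t : ℝ) : Mmat l t 0 1 = t * l := rfl

@[simp]
lemma nMat_apply_zero_one (u : ℝ) : nMat u 0 1 = u := rfl

lemma continuous_nMat : Continuous nMat := by
  refine continuous_matrix fun i j => ?_
  fin_cases i <;> fin_cases j <;> simp [nMat] <;> fun_prop

lemma continuousOn_Mmat (l : ℝ) : ContinuousOn (Mmat l) {0}ᶜ := by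
  refine continuousOn_pi.2 fun i => continuousOn_pi.2 fun j => ?_
  fin_cases i <;> fin_cases j <;> simp [Mmat] <;> fun_prop (disch := simp_all)

lemma Mmat_mul_inv_mul (s u : ℝ) {l : ℝ} (hl : l ≠ 0) :
    Mmat (s * l) (l⁻¹ * u) =
      !![Real.sqrt (1 - (s * l) ^ 2), s * u, 0;
         -(s * l ^ 2 / u), Real.sqrt (1 - (s * l) ^ 2), 0;
         0, 0, 1] := by
  rw [Mmat, mul_inv, inv_inv]
  congr 4
  · field_simp
  · ring

lemma tendsto_Mmat_mul_inv_mul (s u : ℝ) :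
    Tendsto (fun l => Mmat (s * l) (l⁻¹ * u)) (𝓝[≠] 0) (𝓝 (nMat (s * u))) := by
  set g : ℝ → Matrix (Fin 3) (Fin 3) ℝ := fun l =>
    !![Real.sqrt (1 - (s * l) ^ 2), s * u, 0; -(s * l ^ 2 / u), Real.sqrt (1 - (s * l) ^ 2), 0;
      0, 0, 1]
  have hg : Continuous g := by
    refine continuous_matrix fun i j => ?_
    fin_cases i <;> fin_cases j <;> simp [g] <;> fun_prop
  have hg0 : g 0 = nMat (s * u) := by
    ext i j
    fin_cases i <;> fin_cases j <;> simp [g, nMat]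
  rw [← hg0]
  refine (hg.continuousAt.mono_left nhdsWithin_le_nhds).congr' ?_
  filter_upwards [self_mem_nhdsWithin] with l hl
  exact (Mmat_mul_inv_mul s u hl).symm

lemma mul_Forb_eq_integral (f : Matrix (Fin 3) (Fin 3) ℝ → ℂ) (a : ℝ) {l : ℝ} (hl : 0 < l) :
    (l : ℂ) * Forb f a =
      ∫ u in Ioi (0 : ℝ), (Real.sign (l⁻¹ * u - 1) : ℂ) * f (Mmat a (l⁻¹ * u)) := by
  rw [integral_comp_mul_left_Ioi (fun t => (Real.sign (t - 1) : ℂ) * f (Mmat a t)) 0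
    (inv_pos.2 hl), mul_zero, inv_inv, Forb, Complex.real_smul]

section Asymptotics

variable {f : Matrix (Fin 3) (Fin 3) ℝ → ℂ}

lemma tendsto_rescaled_integrand (hf : Continuous f) (s : ℝ) {u : ℝ} (hu : 0 < u) :
    Tendsto (fun l => (Real.sign (l⁻¹ * u - 1) : ℂ) * f (Mmat (s * l) (l⁻¹ * u)))
      (𝓝[>] 0) (𝓝 (f (nMat (s * u)))) := by
  have hlim : Tendsto (fun l => f (Mmat (s * l) (l⁻¹ * u))) (𝓝[>] 0) (𝓝 (f (nMat (s * u)))) :=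
    (hf.tendsto _).comp ((tendsto_Mmat_mul_inv_mul s u).mono_left
      (nhdsWithin_mono _ fun l hl => (ne_of_gt hl : l ≠ 0)))
  refine hlim.congr' ?_
  filter_upwards [Ioo_mem_nhdsGT hu] with l ⟨hl0, hlu⟩
  rw [Real.sign_of_pos (by rw [sub_pos, inv_mul_eq_div]; exact (one_lt_div hl0).2 hlu),
    Complex.ofReal_one, one_mul]

lemma tendsto_mul_Forb_mul (hf : Continuous f) (hsupp : HasCompactSupport f) {s : ℝ}
    (hs : s ≠ 0) :
    Tendsto (fun l : ℝ => (l : ℂ) * Forb f (s * l)) (𝓝[>] 0)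
      (𝓝 (∫ u in Ioi (0 : ℝ), f (nMat (s * u)))) := by
  obtain ⟨C, hC⟩ := hsupp.exists_bound_of_continuous hf
  obtain ⟨R, hR⟩ := hsupp.exists_eq_zero_of_lt_abs (g := fun A => A 0 1)
    (continuous_id.matrix_elem 0 1)
  set bound : ℝ → ℝ := (Icc 0 (R / |s|)).indicator fun _ => C with hbound_def
  have hbound : Integrable bound (volume.restrict (Ioi 0)) :=
    ((integrable_indicator_iff measurableSet_Icc).2
      (integrableOn_const measure_Icc_lt_top.ne)).restrict
  refine (tendsto_integral_filter_of_dominated_convergence bound ?_ ?_ hbound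
    ((ae_restrict_iff' measurableSet_Ioi).2 (ae_of_all _ fun u hu =>
      tendsto_rescaled_integrand hf s hu))).congr' ?_
  · filter_upwards [self_mem_nhdsWithin] with l (hl : 0 < l)
    have hmaps : MapsTo (fun u => l⁻¹ * u) (Ioi 0) {0}ᶜ := fun u (hu : 0 < u) =>
      (mul_pos (inv_pos.2 hl) hu).ne'
    exact (Complex.measurable_ofReal.comp
      (Real.measurable_sign.comp (by fun_prop))).aestronglyMeasurable.mul
      ((hf.comp_continuousOn ((continuousOn_Mmat _).comp (by fun_prop) hmaps)).aestronglyMeasurable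
        measurableSet_Ioi)
  · filter_upwards [self_mem_nhdsWithin] with l (hl : 0 < l)
    refine (ae_restrict_iff' measurableSet_Ioi).2 (ae_of_all _ fun u (hu : 0 < u) => ?_)
    rw [norm_mul, Complex.norm_real, Real.norm_eq_abs]
    by_cases huR : u ≤ R / |s|
    · rw [hbound_def, indicator_of_mem (show u ∈ Icc 0 (R / |s|) from ⟨hu.le, huR⟩)]
      exact (mul_le_of_le_one_left (norm_nonneg _) (Real.abs_sign_le_one _)).trans (hC _)
    · have hvanish : f (Mmat (s * l) (l⁻¹ * u)) = 0 := by
        refine hR _ ?_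
        rw [Mmat_apply_zero_one, show l⁻¹ * u * (s * l) = s * u by field_simp, abs_mul,
          abs_of_pos hu]
        exact (div_lt_iff₀' (abs_pos.2 hs)).1 (not_le.1 huR)
      rw [hbound_def, indicator_of_notMem (show u ∉ Icc 0 (R / |s|) from fun h => huR h.2),
        hvanish, norm_zero, mul_zero]
  · filter_upwards [self_mem_nhdsWithin] with l hl
    exact (mul_Forb_eq_integral f _ hl).symm

lemma integrable_comp_nMat (hf : Continuous f) (hsupp : HasCompactSupport f) :
    Integrable fun u => f (nMat u) := by
  obtain ⟨R, hR⟩ := hsupp.exists_eq_zero_of_lt_abs (g := fun A => A 0 1)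
    (continuous_id.matrix_elem 0 1)
  refine (hf.comp continuous_nMat).integrable_of_hasCompactSupport
    (HasCompactSupport.intro (isCompact_Icc (a := -R) (b := R)) fun u hu => hR _ ?_)
  rw [nMat_apply_zero_one]
  by_contra! hle
  exact hu (abs_le.1 hle)

end Asymptotics

/-- Leading singular behavior of the parabolic orbital integral near the identity:
`λ·F(±λ) → ∫₀^∞ f(n(±u)) du` as `λ → 0⁺`, hence
`λ·(F(λ) - F(-λ)) → ∫₀^∞ (f(n(u)) - f(n(-u))) du`. -/
theorem parabolic_orbital_integral_leading_behavior (f : Matrix (Fin 3) (Fin 3) ℝ → ℂ)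
    (hf : Continuous f) (hsupp : HasCompactSupport f) :
    Tendsto (fun l : ℝ => (l : ℂ) * Forb f l) (nhdsWithin 0 (Set.Ioi 0))
      (nhds (∫ u in Set.Ioi (0 : ℝ), f (nMat u))) ∧
    Tendsto (fun l : ℝ => (l : ℂ) * Forb f (-l)) (nhdsWithin 0 (Set.Ioi 0))
      (nhds (∫ u in Set.Ioi (0 : ℝ), f (nMat (-u)))) ∧
    Tendsto (fun l : ℝ => (l : ℂ) * (Forb f l - Forb f (-l))) (nhdsWithin 0 (Set.Ioi 0))
      (nhds (∫ u in Set.Ioi (0 : ℝ), (f (nMat u) - f (nMat (-u))))) := by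
  have hplus := tendsto_mul_Forb_mul hf hsupp one_ne_zero
  have hminus := tendsto_mul_Forb_mul hf hsupp (neg_ne_zero.2 one_ne_zero)
  simp only [one_mul, neg_one_mul] at hplus hminus
  have hint := integrable_comp_nMat hf hsupp
  refine ⟨hplus, hminus, ?_⟩
  rw [integral_sub hint.integrableOn hint.comp_neg.integrableOn]
  simpa only [mul_sub] using hplus.sub hminus
end
end
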